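/- Assume hypothesis (B1) and 0 ≤ α < p − 1, and let (u,v) be a non-constant positive radial solution on B_R of the system Δ_p u = f₁(|x|)·g₁(v)·|∇u|^α, Δ_p v = f₂(|x|)·g₂(v)·g₃(|∇u|). Then the function r ↦ v'(r)^{p−1} is differentiable on (0,R) and, for all 0 < r < R, (1/n)·f₂(r)·g₂(v(r))·g₃(u'(r)) ≤ (v'(r)^{p−1})' ≤ f₂(r)·g₂(v(r))·g₃(u'(r)). -/

import Mathlib

open Set Filter Topology

noncomputable section

/-- Hypothesis (B1) for a single function: continuous, non-decreasing on `[0,∞)`,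
positive on `(0,∞)`. -/
def B1cond (f : ℝ → ℝ) : Prop :=
  ContinuousOn f (Set.Ici 0) ∧ MonotoneOn f (Set.Ici 0) ∧ ∀ t : ℝ, 0 < t → 0 < f t

/-- `w` is not a constant function on `[0,R)`. -/
def NonConstOn (R : EReal) (w : ℝ → ℝ) : Prop :=
  ¬ ∃ c : ℝ, ∀ r : ℝ, 0 ≤ r → (r : EReal) < R → w r = c

/-- A positive radial solution on `B_R` (with `0 < R ≤ ∞`) of the system
`Δ_p u = f₁(|x|)·g₁(v)·|∇u|^α`, `Δ_p v = f₂(|x|)·g₂(v)·g₃(|∇u|)`: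
a pair of C¹ functions `u, v : [0,R) → ℝ` (with derivatives `u', v'`) such that
the maps `r ↦ r^{n−1}·u'(r)·|u'(r)|^{p−2}` and `r ↦ r^{n−1}·v'(r)·|v'(r)|^{p−2}`
are differentiable on `(0,R)` with the prescribed derivatives, `u'(0) = v'(0) = 0`,
and `u, v > 0` on `(0,R)`. -/
structure RadialSol (n : ℕ) (p α : ℝ) (f₁ f₂ g₁ g₂ g₃ : ℝ → ℝ) (R : EReal)
    (u v u' v' : ℝ → ℝ) : Prop where
  hu : ∀ r : ℝ, 0 ≤ r → (r : EReal) < R → HasDerivWithinAt u (u' r) (Set.Ici 0) r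
  hv : ∀ r : ℝ, 0 ≤ r → (r : EReal) < R → HasDerivWithinAt v (v' r) (Set.Ici 0) r
  hu'c : ContinuousOn u' {r : ℝ | 0 ≤ r ∧ (r : EReal) < R}
  hv'c : ContinuousOn v' {r : ℝ | 0 ≤ r ∧ (r : EReal) < R}
  hu'0 : u' 0 = 0
  hv'0 : v' 0 = 0
  hupos : ∀ r : ℝ, 0 < r → (r : EReal) < R → 0 < u r
  hvpos : ∀ r : ℝ, 0 < r → (r : EReal) < R → 0 < v r
  hequ : ∀ r : ℝ, 0 < r → (r : EReal) < R →
    HasDerivAt (fun t : ℝ => t ^ (n - 1) * u' t * |u' t| ^ (p - 2))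
      (r ^ (n - 1) * (f₁ r * g₁ (v r) * |u' r| ^ α)) r
  heqv : ∀ r : ℝ, 0 < r → (r : EReal) < R →
    HasDerivAt (fun t : ℝ => t ^ (n - 1) * v' t * |v' t| ^ (p - 2))
      (r ^ (n - 1) * (f₂ r * g₂ (v r) * g₃ (|u' r|))) r

/-!
Write `k = n - 1` and `φ_p(x) = x |x|^{p-2}`. The right-hand sides are nonnegative and
`u'(0) = v'(0) = 0`, so the fluxes `r^k φ_p(u')`, `r^k φ_p(v')` increase from `0`; hence
`u', v' ≥ 0` and `v` is nondecreasing. For `w = u'`, `G = f₁ g₁(v)` and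
`c = (p-1-α)/(p-1) > 0`, the function `Ψ = (r^k w^{p-1})^c` has `Ψ' = c r^{kc} G` wherever
`w > 0`; comparing with `c G(r) r^{kc+1}/(kc+1)` from the last zero of `w` gives
`k w^{p-1-α} ≤ r G`, which says `(w^{p-1})' = G w^α - (k/r) w^{p-1} ≥ 0`. So `u'` is
nondecreasing, hence so is `F = f₂ g₂(v) g₃(u')`, and `r^k v'^{p-1} = ∫₀^r s^k F ≤ F(r) r^n / n`.
Since `(v'^{p-1})' = F - (k/r) v'^{p-1}`, this yields `F/n ≤ (v'^{p-1})' ≤ F`.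
-/

lemma mul_abs_rpow_sub_two_of_nonneg {p x : ℝ} (hp : 1 < p) (hx : 0 ≤ x) :
    x * |x| ^ (p - 2) = x ^ (p - 1) := by
  rcases hx.eq_or_lt with rfl | hx
  · rw [zero_mul, Real.zero_rpow (by linarith)]
  · rw [abs_of_pos hx, ← Real.rpow_one_add' hx.le (by linarith)]
    ring_nf

lemma continuous_mul_abs_rpow_sub_two {p : ℝ} (hp : 1 < p) :
    Continuous fun x : ℝ => x * |x| ^ (p - 2) := by
  refine continuous_iff_continuousAt.2 fun x => ?_
  rcases eq_or_ne x 0 with rfl | hx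
  · have hnorm : ∀ y : ℝ, ‖y * |y| ^ (p - 2)‖ = |y| ^ (p - 1) := fun y => by
      rw [Real.norm_eq_abs, abs_mul, abs_of_nonneg (Real.rpow_nonneg (abs_nonneg y) _)]
      simpa using mul_abs_rpow_sub_two_of_nonneg hp (abs_nonneg y)
    have hlim : Tendsto (fun y : ℝ => |y| ^ (p - 1)) (𝓝 0) (𝓝 0) := by
      simpa [Real.zero_rpow (by linarith : p - 1 ≠ 0)] using
        (continuous_abs.rpow_const fun _ => Or.inr (by linarith : (0 : ℝ) ≤ p - 1)).tendsto 0
    simpa [ContinuousAt] using squeeze_zero_norm (fun y => (hnorm y).le) hlim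
  · exact continuousAt_id.mul ((continuous_abs.continuousAt).rpow_const (Or.inl (abs_ne_zero.2 hx)))

lemma B1cond.nonneg {f : ℝ → ℝ} (hf : B1cond f) {x : ℝ} (hx : 0 ≤ x) : 0 ≤ f x := by
  rcases hx.eq_or_lt with rfl | hx
  · refine ge_of_tendsto ((hf.1 0 self_mem_Ici).tendsto.mono_left
      (nhdsWithin_mono _ Ioi_subset_Ici_self)) ?_
    exact eventually_nhdsWithin_of_forall fun t ht => (hf.2.2 t ht).le
  · exact (hf.2.2 x hx).le

lemma monotoneOn_of_hasDerivAt_nonneg_interior {D : Set ℝ} (hD : Convex ℝ D) {f f' : ℝ → ℝ}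
    (hf : ContinuousOn f D) (hf' : ∀ x ∈ interior D, HasDerivAt f (f' x) x)
    (hf'₀ : ∀ x ∈ interior D, 0 ≤ f' x) : MonotoneOn f D :=
  monotoneOn_of_hasDerivWithinAt_nonneg hD hf (fun x hx => (hf' x hx).hasDerivWithinAt) hf'₀

lemma hasDerivAt_of_hasDerivAt_pow_mul {k : ℕ} {y : ℝ → ℝ} {d t : ℝ} (ht : t ≠ 0)
    (h : HasDerivAt (fun s => s ^ k * y s) (t ^ k * d) t) :
    HasDerivAt y (d - k / t * y t) t := by
  have hquot := h.div (hasDerivAt_pow k t) (pow_ne_zero k ht)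
  have hyeq : y =ᶠ[𝓝 t] fun s => s ^ k * y s / s ^ k := by
    filter_upwards [isOpen_ne.mem_nhds ht] with s hs
    field_simp [pow_ne_zero k hs]
  refine (hquot.congr_of_eventuallyEq hyeq).congr_deriv ?_
  rcases k with _ | k
  · simp
  · field_simp
    push_cast
    ring

lemma ContinuousOn.exists_last_zero {w : ℝ → ℝ} {a b : ℝ} (hw : ContinuousOn w (Icc a b))
    (hab : a ≤ b) (ha : w a = 0) :
    ∃ c ∈ Icc a b, w c = 0 ∧ ∀ x ∈ Ioc c b, w x ≠ 0 := by
  have hK : IsCompact (Icc a b ∩ w ⁻¹' {0}) :=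
    isCompact_Icc.of_isClosed_subset
      (hw.preimage_isClosed_of_isClosed isClosed_Icc isClosed_singleton) inter_subset_left
  obtain ⟨c, ⟨hc, hwc⟩, hmax⟩ := hK.exists_isGreatest ⟨a, ⟨left_mem_Icc.2 hab, ha⟩⟩
  exact ⟨c, hc, hwc, fun x hx hwx =>
    (hx.1.trans_le (hmax ⟨⟨hc.1.trans hx.1.le, hx.2⟩, hwx⟩)).false⟩

lemma add_one_mul_le_of_hasDerivAt_rpow_mul {Y g : ℝ → ℝ} {a s m : ℝ} (ha : 0 ≤ a) (has : a ≤ s)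
    (hm : -1 < m) (hY : ContinuousOn Y (Icc a s))
    (hY' : ∀ x ∈ Ioo a s, HasDerivAt Y (x ^ m * g x) x) (hYa : Y a ≤ 0)
    (hg : ∀ x ∈ Ioo a s, g x ≤ g s) (hgs : 0 ≤ g s) :
    (m + 1) * Y s ≤ g s * s ^ (m + 1) := by
  have hm1 : 0 < m + 1 := by linarith
  set B : ℝ → ℝ := fun x => g s * x ^ (m + 1) - (m + 1) * Y x
  have hBc : ContinuousOn B (Icc a s) :=
    (continuousOn_const.mul ((continuousOn_id.rpow_const fun _ _ => Or.inr hm1.le))).sub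
      (continuousOn_const.mul hY)
  have hB : MonotoneOn B (Icc a s) := by
    refine monotoneOn_of_hasDerivAt_nonneg_interior (convex_Icc a s) hBc
      (f' := fun x => (m + 1) * x ^ m * (g s - g x)) ?_ ?_ <;> rw [interior_Icc] <;>
      intro x hx
    · have hx0 : x ≠ 0 := (ha.trans_lt hx.1).ne'
      exact (((Real.hasDerivAt_rpow_const (p := m + 1) (Or.inl hx0)).const_mul (g s)).sub
        ((hY' x hx).const_mul (m + 1))).congr_deriv (by rw [add_sub_cancel_right]; ring)
    · exact mul_nonneg (mul_nonneg hm1.le (Real.rpow_nonneg (ha.trans hx.1.le) _))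
        (sub_nonneg.2 (hg x hx))
  have hBa : 0 ≤ B a := sub_nonneg.2 ((mul_nonpos_of_nonneg_of_nonpos hm1.le hYa).trans
    (mul_nonneg hgs (Real.rpow_nonneg ha _)))
  simpa [B] using hBa.trans (hB (left_mem_Icc.2 has) (right_mem_Icc.2 has) has)

lemma nonneg_of_hasDerivAt_pow_mul_mul_abs_rpow {k : ℕ} {p b : ℝ} {w Φ : ℝ → ℝ} (hp : 1 < p)
    (hw : ContinuousOn w (Ico 0 b)) (hw0 : w 0 = 0)
    (hW : ∀ x ∈ Ioo 0 b, HasDerivAt (fun t => t ^ k * w t * |w t| ^ (p - 2)) (Φ x) x)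
    (hΦ : ∀ x ∈ Ioo 0 b, 0 ≤ Φ x) : ∀ x ∈ Ico 0 b, 0 ≤ w x := by
  set W : ℝ → ℝ := fun t => t ^ k * w t * |w t| ^ (p - 2)
  have hWc : ContinuousOn W (Ico 0 b) := by
    have hW_eq : W = fun t => t ^ k * (w t * |w t| ^ (p - 2)) := funext fun t => mul_assoc _ _ _
    rw [hW_eq]
    exact (continuousOn_pow k).mul ((continuous_mul_abs_rpow_sub_two hp).comp_continuousOn hw)
  have hWmono : MonotoneOn W (Ico 0 b) :=
    monotoneOn_of_hasDerivAt_nonneg_interior (convex_Ico 0 b) hWc (by rwa [interior_Ico])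
      (by rwa [interior_Ico])
  intro x hx
  rcases hx.1.eq_or_lt with rfl | hx0
  · exact hw0.ge
  have hWx : 0 ≤ W x := by
    simpa [W, hw0] using hWmono (left_mem_Ico.2 (hx0.trans hx.2)) hx hx0.le
  by_contra! hneg
  have : W x < 0 := mul_neg_of_neg_of_pos (mul_neg_of_pos_of_neg (pow_pos hx0 k) hneg)
    (Real.rpow_pos_of_pos (abs_pos.2 hneg.ne) _)
  linarith

section RadialMonotone

variable {k : ℕ} {q α b : ℝ} {w G : ℝ → ℝ}

lemma pow_mul_rpow_rpow {x y : ℝ} (hx : 0 ≤ x) (hy : 0 ≤ y) (q c : ℝ) :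
    (x ^ k * y ^ q) ^ c = x ^ (k * c) * y ^ (q * c) := by
  rw [Real.mul_rpow (pow_nonneg hx k) (Real.rpow_nonneg hy q), ← Real.rpow_natCast,
    ← Real.rpow_mul hx, ← Real.rpow_mul hy]

lemma hasDerivAt_pow_mul_rpow_rpow {c x : ℝ} (hc : q * c = q - α) (hx : 0 < x) (hwx : 0 < w x)
    (h : HasDerivAt (fun t => t ^ k * w t ^ q) (x ^ k * (G x * w x ^ α)) x) :
    HasDerivAt (fun t => (t ^ k * w t ^ q) ^ c) (x ^ ((k : ℝ) * c) * (c * G x)) x := by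
  refine (h.rpow_const (Or.inl (by positivity))).congr_deriv ?_
  have hsplit : w x ^ q = w x ^ α * w x ^ (q - α) := by
    rw [← Real.rpow_add hwx]; ring_nf
  rw [Real.rpow_sub_one (by positivity), pow_mul_rpow_rpow hx.le hwx.le, hc, hsplit]
  field_simp

lemma natCast_mul_rpow_sub_le_mul (hq : 0 < q) (hα : α < q) (hw : ContinuousOn w (Ico 0 b))
    (hw0 : w 0 = 0) (hwnn : ∀ x ∈ Ico 0 b, 0 ≤ w x) (hG : MonotoneOn G (Ioo 0 b))
    (hGnn : ∀ x ∈ Ioo 0 b, 0 ≤ G x)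
    (hH : ∀ x ∈ Ioo 0 b, HasDerivAt (fun t => t ^ k * w t ^ q) (x ^ k * (G x * w x ^ α)) x)
    {s : ℝ} (hs : s ∈ Ioo 0 b) : k * w s ^ (q - α) ≤ s * G s := by
  have hβ : 0 < q - α := sub_pos.2 hα
  rcases (hwnn s ⟨hs.1.le, hs.2⟩).eq_or_lt with hws | hws
  · rw [← hws, Real.zero_rpow hβ.ne', mul_zero]
    exact mul_nonneg hs.1.le (hGnn s hs)
  have hIcc : Icc 0 s ⊆ Ico 0 b := Icc_subset_Ico_right hs.2
  obtain ⟨a, ha, hwa, hne⟩ := (hw.mono hIcc).exists_last_zero hs.1.le hw0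
  have has : a < s := ha.2.lt_of_ne (by rintro rfl; exact hws.ne' hwa)
  have hpos : ∀ x ∈ Ioo a s, 0 < w x := fun x hx =>
    (hwnn x (hIcc ⟨ha.1.trans hx.1.le, hx.2.le⟩)).lt_of_ne (hne x ⟨hx.1, hx.2.le⟩).symm
  set c := (q - α) / q
  have hc : q * c = q - α := mul_div_cancel₀ _ hq.ne'
  have hc0 : 0 < c := div_pos hβ hq
  have hΨc : ContinuousOn (fun t => (t ^ k * w t ^ q) ^ c) (Icc a s) :=
    ((continuousOn_pow k).mul (((hw.mono hIcc).mono (Icc_subset_Icc_left ha.1)).rpow_const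
      fun _ _ => Or.inr hq.le)).rpow_const fun _ _ => Or.inr hc0.le
  have hΨ := add_one_mul_le_of_hasDerivAt_rpow_mul (g := fun x => c * G x) (m := k * c)
    ha.1 has.le (by linarith [mul_nonneg k.cast_nonneg hc0.le]) hΨc
    (fun x hx => hasDerivAt_pow_mul_rpow_rpow hc (ha.1.trans_lt hx.1) (hpos x hx)
      (hH x ⟨ha.1.trans_lt hx.1, hx.2.trans hs.2⟩))
    (by simp [hwa, Real.zero_rpow hq.ne', Real.zero_rpow hc0.ne'])
    (fun x hx => mul_le_mul_of_nonneg_left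
      (hG ⟨ha.1.trans_lt hx.1, hx.2.trans hs.2⟩ hs hx.2.le) hc0.le)
    (mul_nonneg hc0.le (hGnn s hs))
  rw [pow_mul_rpow_rpow hs.1.le hws.le, hc, Real.rpow_add_one hs.1.ne'] at hΨ
  have hskc : 0 < s ^ ((k : ℝ) * c) := Real.rpow_pos_of_pos hs.1 _
  have hw_le : ((k : ℝ) * c + 1) * w s ^ (q - α) ≤ c * (s * G s) :=
    le_of_mul_le_mul_left (by linarith) hskc
  have hwβ : 0 ≤ w s ^ (q - α) := Real.rpow_nonneg hws.le _
  refine le_of_mul_le_mul_left ?_ hc0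
  nlinarith

lemma monotoneOn_of_hasDerivAt_pow_mul_rpow (hq : 0 < q) (hα : α < q)
    (hw : ContinuousOn w (Ico 0 b)) (hw0 : w 0 = 0) (hwnn : ∀ x ∈ Ico 0 b, 0 ≤ w x)
    (hG : MonotoneOn G (Ioo 0 b)) (hGnn : ∀ x ∈ Ioo 0 b, 0 ≤ G x)
    (hH : ∀ x ∈ Ioo 0 b, HasDerivAt (fun t => t ^ k * w t ^ q) (x ^ k * (G x * w x ^ α)) x) :
    MonotoneOn w (Ico 0 b) := by
  have hD : ∀ x ∈ Ioo 0 b, HasDerivAt (fun t => w t ^ q) (G x * w x ^ α - k / x * w x ^ q) x :=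
    fun x hx => hasDerivAt_of_hasDerivAt_pow_mul hx.1.ne' (hH x hx)
  have hD0 : ∀ x ∈ Ioo 0 b, 0 ≤ G x * w x ^ α - k / x * w x ^ q := by
    intro x hx
    rcases (hwnn x ⟨hx.1.le, hx.2⟩).eq_or_lt with hwx | hwx
    · rw [← hwx, Real.zero_rpow hq.ne', mul_zero, sub_zero]
      exact mul_nonneg (hGnn x hx) (Real.rpow_nonneg le_rfl _)
    have hkey := natCast_mul_rpow_sub_le_mul hq hα hw hw0 hwnn hG hGnn hH hx
    have hsplit : w x ^ q = w x ^ α * w x ^ (q - α) := by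
      rw [← Real.rpow_add hwx]; ring_nf
    rw [hsplit, sub_nonneg, div_mul_eq_mul_div, div_le_iff₀ hx.1]
    calc (k : ℝ) * (w x ^ α * w x ^ (q - α)) = w x ^ α * (k * w x ^ (q - α)) := by ring
      _ ≤ w x ^ α * (x * G x) := mul_le_mul_of_nonneg_left hkey (Real.rpow_nonneg hwx.le _)
      _ = G x * w x ^ α * x := by ring
  have hmono : MonotoneOn (fun t => w t ^ q) (Ico 0 b) :=
    monotoneOn_of_hasDerivAt_nonneg_interior (convex_Ico 0 b)
      (hw.rpow_const fun _ _ => Or.inr hq.le) (by rwa [interior_Ico]) (by rwa [interior_Ico])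
  intro x hx y hy hxy
  exact (Real.rpow_le_rpow_iff (hwnn x hx) (hwnn y hy) hq).1 (hmono hx hy hxy)

end RadialMonotone

lemma hasDerivAt_pow_mul_rpow_of_mul_abs {k : ℕ} {p x D : ℝ} {w : ℝ → ℝ} (hp : 1 < p)
    (hw : ∀ᶠ t in 𝓝 x, 0 ≤ w t) (h : HasDerivAt (fun t => t ^ k * w t * |w t| ^ (p - 2)) D x) :
    HasDerivAt (fun t => t ^ k * w t ^ (p - 1)) D x :=
  h.congr_of_eventuallyEq (hw.mono fun t ht => by
    dsimp only
    rw [mul_assoc, mul_abs_rpow_sub_two_of_nonneg hp ht])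

lemma hasDerivAt_bounds_of_hasDerivAt_pow_mul {k : ℕ} {y F : ℝ → ℝ} {r : ℝ} (hr : 0 < r)
    (hy : ContinuousOn y (Icc 0 r)) (hy0 : y 0 = 0) (hyr : 0 ≤ y r)
    (hY : ∀ x ∈ Ioc 0 r, HasDerivAt (fun t => t ^ k * y t) (x ^ k * F x) x)
    (hF : ∀ x ∈ Ioo 0 r, F x ≤ F r) (hFr : 0 ≤ F r) :
    HasDerivAt y (F r - k / r * y r) r ∧
      F r / (k + 1) ≤ F r - k / r * y r ∧ F r - k / r * y r ≤ F r := by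
  refine ⟨hasDerivAt_of_hasDerivAt_pow_mul hr.ne' (hY r ⟨hr, le_rfl⟩), ?_,
    sub_le_self _ (by positivity)⟩
  have hY_le := add_one_mul_le_of_hasDerivAt_rpow_mul (Y := fun t => t ^ k * y t) (m := k)
    le_rfl hr.le (by linarith [k.cast_nonneg (α := ℝ)]) ((continuousOn_pow k).mul hy)
    (fun x hx => by simpa only [Real.rpow_natCast] using hY x ⟨hx.1, hx.2.le⟩)
    (by simp [hy0]) hF hFr
  rw [Real.rpow_add_one hr.ne', Real.rpow_natCast] at hY_le
  have hyF : ((k : ℝ) + 1) * y r ≤ F r * r :=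
    le_of_mul_le_mul_left (by linarith) (pow_pos hr k)
  have hky : (k : ℝ) / r * y r * (k + 1) ≤ k * F r := by
    rw [div_mul_eq_mul_div, div_mul_eq_mul_div, div_le_iff₀ hr]
    nlinarith [k.cast_nonneg (α := ℝ)]
  rw [div_le_iff₀ (by positivity)]
  linarith

section RadialSol

variable {n : ℕ} {p α : ℝ} {f₁ f₂ g₁ g₂ g₃ : ℝ → ℝ} {R : EReal} {u v u' v' : ℝ → ℝ} {b : ℝ}

lemma RadialSol.deriv_u_nonneg (hsol : RadialSol n p α f₁ f₂ g₁ g₂ g₃ R u v u' v') (hp : 1 < p)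
    (hf₁ : B1cond f₁) (hg₁ : B1cond g₁) (hb : (b : EReal) ≤ R) : ∀ x ∈ Ico 0 b, 0 ≤ u' x := by
  have hlt : ∀ x ∈ Ico 0 b, (x : EReal) < R := fun x hx =>
    (EReal.coe_lt_coe_iff.2 hx.2).trans_le hb
  refine nonneg_of_hasDerivAt_pow_mul_mul_abs_rpow hp
    (hsol.hu'c.mono fun x hx => ⟨hx.1, hlt x hx⟩) hsol.hu'0
    (fun x hx => hsol.hequ x hx.1 (hlt x (Ioo_subset_Ico_self hx))) fun x hx => ?_
  have hvx := hsol.hvpos x hx.1 (hlt x (Ioo_subset_Ico_self hx))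
  exact mul_nonneg (pow_nonneg hx.1.le _) (mul_nonneg (mul_nonneg (hf₁.nonneg hx.1.le)
    (hg₁.2.2 _ hvx).le) (Real.rpow_nonneg (abs_nonneg _) _))

lemma RadialSol.deriv_v_nonneg (hsol : RadialSol n p α f₁ f₂ g₁ g₂ g₃ R u v u' v') (hp : 1 < p)
    (hf₂ : B1cond f₂) (hg₂ : B1cond g₂) (hg₃ : B1cond g₃) (hb : (b : EReal) ≤ R) :
    ∀ x ∈ Ico 0 b, 0 ≤ v' x := by
  have hlt : ∀ x ∈ Ico 0 b, (x : EReal) < R := fun x hx =>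
    (EReal.coe_lt_coe_iff.2 hx.2).trans_le hb
  refine nonneg_of_hasDerivAt_pow_mul_mul_abs_rpow hp
    (hsol.hv'c.mono fun x hx => ⟨hx.1, hlt x hx⟩) hsol.hv'0
    (fun x hx => hsol.heqv x hx.1 (hlt x (Ioo_subset_Ico_self hx))) fun x hx => ?_
  have hvx := hsol.hvpos x hx.1 (hlt x (Ioo_subset_Ico_self hx))
  exact mul_nonneg (pow_nonneg hx.1.le _) (mul_nonneg (mul_nonneg (hf₂.nonneg hx.1.le)
    (hg₂.2.2 _ hvx).le) (hg₃.nonneg (abs_nonneg _)))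

lemma RadialSol.monotoneOn_v (hsol : RadialSol n p α f₁ f₂ g₁ g₂ g₃ R u v u' v') (hp : 1 < p)
    (hf₂ : B1cond f₂) (hg₂ : B1cond g₂) (hg₃ : B1cond g₃) (hb : (b : EReal) ≤ R) :
    MonotoneOn v (Ico 0 b) := by
  have hlt : ∀ x ∈ Ico 0 b, (x : EReal) < R := fun x hx =>
    (EReal.coe_lt_coe_iff.2 hx.2).trans_le hb
  refine monotoneOn_of_hasDerivAt_nonneg_interior (convex_Ico 0 b)
    (fun x hx => ((hsol.hv x hx.1 (hlt x hx)).continuousWithinAt).mono fun y hy => hy.1)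
    (f' := v') ?_ ?_ <;> rw [interior_Ico] <;> intro x hx
  · exact (hsol.hv x hx.1.le (hlt x (Ioo_subset_Ico_self hx))).hasDerivAt (Ici_mem_nhds hx.1)
  · exact hsol.deriv_v_nonneg hp hf₂ hg₂ hg₃ hb x (Ioo_subset_Ico_self hx)

lemma RadialSol.monotoneOn_deriv_u (hsol : RadialSol n p α f₁ f₂ g₁ g₂ g₃ R u v u' v')
    (hp : 1 < p) (hα : α < p - 1) (hf₁ : B1cond f₁) (hf₂ : B1cond f₂) (hg₁ : B1cond g₁)
    (hg₂ : B1cond g₂) (hg₃ : B1cond g₃) (hb : (b : EReal) ≤ R) : MonotoneOn u' (Ico 0 b) := by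
  have hlt : ∀ x ∈ Ico 0 b, (x : EReal) < R := fun x hx =>
    (EReal.coe_lt_coe_iff.2 hx.2).trans_le hb
  have hvpos : ∀ x ∈ Ioo 0 b, 0 < v x := fun x hx =>
    hsol.hvpos x hx.1 (hlt x (Ioo_subset_Ico_self hx))
  have hu'nn := hsol.deriv_u_nonneg hp hf₁ hg₁ hb
  refine monotoneOn_of_hasDerivAt_pow_mul_rpow (k := n - 1) (G := fun x => f₁ x * g₁ (v x))
    (sub_pos.2 hp) hα (hsol.hu'c.mono fun x hx => ⟨hx.1, hlt x hx⟩) hsol.hu'0 hu'nn ?_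
    (fun x hx => mul_nonneg (hf₁.nonneg hx.1.le) (hg₁.2.2 _ (hvpos x hx)).le) fun x hx => ?_
  · refine (hf₁.2.1.mono fun x hx => hx.1.le).mul
      (hg₁.2.1.comp ((hsol.monotoneOn_v hp hf₂ hg₂ hg₃ hb).mono Ioo_subset_Ico_self)
        fun x hx => (hvpos x hx).le)
      (fun x hx => hf₁.nonneg hx.1.le) fun x hx => (hg₁.2.2 _ (hvpos x hx)).le
  · have h := hsol.hequ x hx.1 (hlt x (Ioo_subset_Ico_self hx))
    rw [abs_of_nonneg (hu'nn x (Ioo_subset_Ico_self hx))] at h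
    exact hasDerivAt_pow_mul_rpow_of_mul_abs hp (eventually_of_mem (Ioo_mem_nhds hx.1 hx.2)
      fun t ht => hu'nn t (Ioo_subset_Ico_self ht)) h

lemma RadialSol.monotoneOn_rhs_v (hsol : RadialSol n p α f₁ f₂ g₁ g₂ g₃ R u v u' v')
    (hp : 1 < p) (hα : α < p - 1) (hf₁ : B1cond f₁) (hf₂ : B1cond f₂) (hg₁ : B1cond g₁)
    (hg₂ : B1cond g₂) (hg₃ : B1cond g₃) (hb : (b : EReal) ≤ R) :
    MonotoneOn (fun x => f₂ x * g₂ (v x) * g₃ |u' x|) (Ioo 0 b) := by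
  have hvpos : ∀ x ∈ Ioo 0 b, 0 < v x := fun x hx =>
    hsol.hvpos x hx.1 ((EReal.coe_lt_coe_iff.2 hx.2).trans_le hb)
  have hu'nn : ∀ x ∈ Ioo 0 b, 0 ≤ u' x := fun x hx =>
    hsol.deriv_u_nonneg hp hf₁ hg₁ hb x (Ioo_subset_Ico_self hx)
  have hu'mono : MonotoneOn (fun x => |u' x|) (Ioo 0 b) := fun x hx y hy hxy => by
    simpa only [abs_of_nonneg (hu'nn x hx), abs_of_nonneg (hu'nn y hy)] using
      (hsol.monotoneOn_deriv_u hp hα hf₁ hf₂ hg₁ hg₂ hg₃ hb).mono Ioo_subset_Ico_self hx hy hxy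
  refine ((hf₂.2.1.mono fun x hx => hx.1.le).mul
      (hg₂.2.1.comp ((hsol.monotoneOn_v hp hf₂ hg₂ hg₃ hb).mono Ioo_subset_Ico_self)
        fun x hx => (hvpos x hx).le)
      (fun x hx => hf₂.nonneg hx.1.le) fun x hx => (hg₂.2.2 _ (hvpos x hx)).le).mul
    (hg₃.2.1.comp hu'mono fun x _ => abs_nonneg (u' x)) (fun x hx => ?_)
    fun x _ => hg₃.nonneg (abs_nonneg _)
  exact mul_nonneg (hf₂.nonneg hx.1.le) (hg₂.2.2 _ (hvpos x hx)).le

lemma RadialSol.hasDerivAt_pow_mul_rpow_deriv_v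
    (hsol : RadialSol n p α f₁ f₂ g₁ g₂ g₃ R u v u' v') (hp : 1 < p) (hf₂ : B1cond f₂)
    (hg₂ : B1cond g₂) (hg₃ : B1cond g₃) (hb : (b : EReal) ≤ R) :
    ∀ x ∈ Ioo 0 b, HasDerivAt (fun t => t ^ (n - 1) * v' t ^ (p - 1))
      (x ^ (n - 1) * (f₂ x * g₂ (v x) * g₃ |u' x|)) x := fun x hx =>
  hasDerivAt_pow_mul_rpow_of_mul_abs hp
    (eventually_of_mem (Ioo_mem_nhds hx.1 hx.2) fun t ht =>
      hsol.deriv_v_nonneg hp hf₂ hg₂ hg₃ hb t (Ioo_subset_Ico_self ht))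
    (hsol.heqv x hx.1 ((EReal.coe_lt_coe_iff.2 hx.2).trans_le hb))

end RadialSol

theorem convexity_estimate_v_general
    (n : ℕ) (hn : 2 ≤ n) (p α : ℝ) (hp : 1 < p) (hα : α < p - 1)
    (f₁ f₂ g₁ g₂ g₃ : ℝ → ℝ)
    (hf₁ : B1cond f₁) (hf₂ : B1cond f₂) (hg₁ : B1cond g₁) (hg₂ : B1cond g₂) (hg₃ : B1cond g₃)
    (R : EReal) (u v u' v' : ℝ → ℝ)
    (hsol : RadialSol n p α f₁ f₂ g₁ g₂ g₃ R u v u' v') :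
    ∀ r : ℝ, 0 < r → (r : EReal) < R →
      ∃ d : ℝ, HasDerivAt (fun t : ℝ => v' t ^ (p - 1)) d r ∧
        (1 / (n : ℝ)) * (f₂ r * g₂ (v r) * g₃ (u' r)) ≤ d ∧
        d ≤ f₂ r * g₂ (v r) * g₃ (u' r) := by
  intro r hr hrR
  obtain ⟨b, hrb, hbR⟩ := EReal.lt_iff_exists_real_btwn.1 hrR
  rw [EReal.coe_lt_coe_iff] at hrb
  have hv'nn := hsol.deriv_v_nonneg hp hf₂ hg₂ hg₃ hbR.le
  have hv'c : ContinuousOn (fun t => v' t ^ (p - 1)) (Icc 0 r) :=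
    (hsol.hv'c.mono fun x hx => ⟨hx.1, (EReal.coe_le_coe_iff.2 hx.2).trans_lt hrR⟩).rpow_const
      fun _ _ => Or.inr (by linarith)
  obtain ⟨hd, hlow, hup⟩ := hasDerivAt_bounds_of_hasDerivAt_pow_mul (k := n - 1) hr hv'c
    (by rw [hsol.hv'0, Real.zero_rpow (by linarith)]) (Real.rpow_nonneg (hv'nn r ⟨hr.le, hrb⟩) _)
    (fun x hx => hsol.hasDerivAt_pow_mul_rpow_deriv_v hp hf₂ hg₂ hg₃ hbR.le x
      ⟨hx.1, hx.2.trans_lt hrb⟩)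
    (fun x hx => hsol.monotoneOn_rhs_v hp hα hf₁ hf₂ hg₁ hg₂ hg₃ hbR.le
      ⟨hx.1, hx.2.trans hrb⟩ ⟨hr, hrb⟩ hx.2.le)
    (mul_nonneg (mul_nonneg (hf₂.nonneg hr.le) (hg₂.2.2 _ (hsol.hvpos r hr hrR)).le)
      (hg₃.nonneg (abs_nonneg _)))
  have hn' : ((n - 1 : ℕ) : ℝ) + 1 = n := by rw [Nat.cast_sub (by omega)]; ring
  rw [abs_of_nonneg (hsol.deriv_u_nonneg hp hf₁ hg₁ hbR.le r ⟨hr.le, hrb⟩)] at hd hlow hup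
  rw [hn'] at hlow
  exact ⟨_, hd, by rwa [one_div_mul_eq_div], hup⟩

/-- Lemma 2.3, estimate (est2): two-sided bounds on the derivative of v'(r)^{p−1}. -/
theorem convexity_estimate_v
    (n : ℕ) (hn : 2 ≤ n) (p α : ℝ) (hp : 1 < p) (hα0 : 0 ≤ α) (hα : α < p - 1)
    (f₁ f₂ g₁ g₂ g₃ : ℝ → ℝ)
    (hf₁ : B1cond f₁) (hf₂ : B1cond f₂) (hg₁ : B1cond g₁) (hg₂ : B1cond g₂) (hg₃ : B1cond g₃)
    (R : EReal) (hR : 0 < R) (u v u' v' : ℝ → ℝ)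
    (hsol : RadialSol n p α f₁ f₂ g₁ g₂ g₃ R u v u' v')
    (hunc : NonConstOn R u) (hvnc : NonConstOn R v) :
    ∀ r : ℝ, 0 < r → (r : EReal) < R →
      ∃ d : ℝ, HasDerivAt (fun t : ℝ => v' t ^ (p - 1)) d r ∧
        (1 / (n : ℝ)) * (f₂ r * g₂ (v r) * g₃ (u' r)) ≤ d ∧
        d ≤ f₂ r * g₂ (v r) * g₃ (u' r) :=
  convexity_estimate_v_general n hn p α hp hα f₁ f₂ g₁ g₂ g₃ hf₁ hf₂ hg₁ hg₂ hg₃ R u v u' v' hsol
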